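/- In the Euclidean plane, two initially parallel piecewise-linear curves that each bend away from the other by angle π/6 at points between which the other curve does not pass remain disjoint forever, and the distance between them tends to infinity. -/
import Mathlib


open Real

/-- Two initially parallel piecewise-linear curves in the plane, each consisting of
two rays with the second ray obtained by rotating by π/6 *away* from the other
curve (modelling passage on opposite sides of a hyperbolic vertex), remain disjoint
forever and the distance between them tends to infinity. -/
theorem stmt_8 (a b : ℝ) (ha : 0 < a) (hb : 0 < b)
    (γ₁ γ₂ : ℝ → ℝ × ℝ)
    (hγ₁ : ∀ t : ℝ, γ₁ t = if t ≤ 0 then (t, a)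
      else (t * Real.cos (π / 6), a + t * Real.sin (π / 6)))
    (hγ₂ : ∀ t : ℝ, γ₂ t = if t ≤ 0 then (t, -b)
      else (t * Real.cos (π / 6), -b - t * Real.sin (π / 6))) :
    (∀ s t : ℝ, γ₁ s ≠ γ₂ t) ∧
    Filter.Tendsto (fun t : ℝ => dist (γ₁ t) (γ₂ t)) Filter.atTop Filter.atTop := by
  have h1 : ∀ s : ℝ, a ≤ (γ₁ s).2 := by
    intro s
    rw [hγ₁ s]
    split_ifs with h
    · simp
    · push_neg at h
      have : 0 < s * Real.sin (π / 6) := by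
        rw [Real.sin_pi_div_six]; positivity
      simp; linarith
  have h2 : ∀ t : ℝ, (γ₂ t).2 ≤ -b := by
    intro t
    rw [hγ₂ t]
    split_ifs with h
    · simp
    · push_neg at h
      have : 0 < t * Real.sin (π / 6) := by
        rw [Real.sin_pi_div_six]; positivity
      simp; linarith
  constructor
  · intro s t hst
    have e1 := h1 s
    rw [hst] at e1
    linarith [h2 t]
  · have key : ∀ t : ℝ, 0 < t → dist (γ₁ t) (γ₂ t) = a + b + t := by
      intro t ht
      rw [hγ₁ t, hγ₂ t, if_neg (not_le.mpr ht), if_neg (not_le.mpr ht)]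
      rw [Prod.dist_eq]
      simp only [Real.sin_pi_div_six, Real.dist_eq]
      rw [sub_self, abs_zero]
      have : |a + t * (1/2) - (-b - t * (1/2))| = a + b + t := by
        rw [abs_of_pos (by linarith)]; ring
      rw [this]
      exact max_eq_right (by linarith)
    have : Filter.Tendsto (fun t : ℝ => a + b + t) Filter.atTop Filter.atTop :=
      Filter.tendsto_atTop_add_const_left _ _ Filter.tendsto_id
    refine Filter.Tendsto.congr' ?_ this
    filter_upwards [Filter.eventually_gt_atTop 0] with t ht
    exact (key t ht).symm
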